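/- Let ρ be a dissectible solution notion and f : Θ → X a social choice function. Then for every nonempty E ⊆ Θ and all θ, θ' ∈ Θ: if θ ∈ E and θ' ∈ γ^{(ρ,f)}[E,θ], then γ^{(ρ,f)}[E,θ'] ⊆ γ^{(ρ,f)}[E,θ]. -/

import Mathlib

open scoped Classical

namespace SeqMech

variable {I : Type*} {Θi : I → Type*} {X : Type*}

/-- Projection of a set of states onto agent `i`'s coordinate. -/
def proj (i : I) (E : Set (∀ j, Θi j)) : Set (Θi i) :=
  (fun θ => θ i) '' E

/-- Projection of a set of states onto the coordinates of the agents other than `i`. -/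
def projNeg (i : I) (E : Set (∀ j, Θi j)) :
    Set (∀ j : {j : I // j ≠ i}, Θi j.1) :=
  (fun θ (j : {j : I // j ≠ i}) => θ j.1) '' E

/-- The semi-operator property: nonempty sets are mapped to nonempty sets. -/
def IsSemiOp (γ : Set (∀ j, Θi j) → (∀ j, Θi j) → Set (∀ j, Θi j)) : Prop :=
  ∀ E θ, E.Nonempty → (γ E θ).Nonempty

/-- A solution notion: `R f γ E θ θ' i Fhat` means `ρ[f,(γ,E),θ,θ',i,Fhat] = 1`.  Its value
depends only on `(f, γ_i[E,θ], θ_i, θ'_i, Fhat_{-i})`. -/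
structure SolutionNotion (I : Type*) (Θi : I → Type*) (X : Type*) where
  R : ((∀ j, Θi j) → X) →
      (Set (∀ j, Θi j) → (∀ j, Θi j) → Set (∀ j, Θi j)) →
      Set (∀ j, Θi j) → (∀ j, Θi j) → (∀ j, Θi j) → I → Set (∀ j, Θi j) → Prop
  meas : ∀ f γ γ' E E' θ τ θ' τ' (i : I) Fhat Fhat',
      proj i (γ E θ) = proj i (γ' E' τ) →
      θ i = τ i → θ' i = τ' i →
      projNeg i Fhat = projNeg i Fhat' →
      (R f γ E θ θ' i Fhat ↔ R f γ' E' τ τ' i Fhat')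

/-- Dissectibility of a solution notion. -/
def Dissectible (ρ : SolutionNotion I Θi X) : Prop :=
  ∀ f γ E θ θ' (i : I) Fhat,
    IsSemiOp γ → E.Nonempty → θ ∈ E → θ' ∈ E →
    (¬ ρ.R f γ E θ θ' i Fhat ↔
      ∃ τ ∈ γ E θ, ∃ γ' : Set (∀ j, Θi j) → (∀ j, Θi j) → Set (∀ j, Θi j),
        IsSemiOp γ' ∧ γ' E θ = {θ, τ} ∧ ¬ ρ.R f γ' E θ θ' i Fhat)

/-- `θ >_i^{[(ρ,f),(γ,E)]} θ'`. -/
def gtRel (ρ : SolutionNotion I Θi X) (f : (∀ j, Θi j) → X)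
    (γ : Set (∀ j, Θi j) → (∀ j, Θi j) → Set (∀ j, Θi j))
    (E : Set (∀ j, Θi j)) (i : I) (θ θ' : ∀ j, Θi j) : Prop :=
  θ ∈ E ∧ θ' ∈ E ∧ ¬ ρ.R f γ E θ θ' i E

/-- `θ ∼_i^{[(ρ,f),(γ,E)]} θ'`. -/
def simRel (ρ : SolutionNotion I Θi X) (f : (∀ j, Θi j) → X)
    (γ : Set (∀ j, Θi j) → (∀ j, Θi j) → Set (∀ j, Θi j))
    (E : Set (∀ j, Θi j)) (i : I) (θ θ' : ∀ j, Θi j) : Prop :=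
  θ i = θ' i ∨ gtRel ρ f γ E i θ θ' ∨ gtRel ρ f γ E i θ' θ

/-- `canonN ρ f n` is the semi-operator `γ^{(ρ,f)-(n+1)}`. -/
noncomputable def canonN (ρ : SolutionNotion I Θi X) (f : (∀ j, Θi j) → X) :
    ℕ → Set (∀ j, Θi j) → (∀ j, Θi j) → Set (∀ j, Θi j)
  | 0 => fun E θ => if θ ∈ E then {θ} else E
  | n + 1 => fun E θ =>
      if θ ∈ E then
        ⋃ τ ∈ canonN ρ f n E θ,
          {θ' ∈ E | ∀ i, simRel ρ f (canonN ρ f n) E i τ θ'}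
      else E

/-- The canonical semi-operator `γ^{(ρ,f)}`. -/
noncomputable def canon (ρ : SolutionNotion I Θi X) (f : (∀ j, Θi j) → X) :
    Set (∀ j, Θi j) → (∀ j, Θi j) → Set (∀ j, Θi j) :=
  fun E θ => if θ ∈ E then ⋃ n, canonN ρ f n E θ else E

/-- Under dissectibility, `¬ ρ.R` at `(γ, E, θ)` is witnessed by a single state of `γ E θ`,
so enlarging `γ E θ` can only preserve it. -/
theorem Dissectible.not_R_mono {ρ : SolutionNotion I Θi X} (hρ : Dissectible ρ)
    {f : (∀ j, Θi j) → X} {γ₁ γ₂ : Set (∀ j, Θi j) → (∀ j, Θi j) → Set (∀ j, Θi j)}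
    {E F : Set (∀ j, Θi j)} {θ θ' : ∀ j, Θi j} {i : I}
    (hγ₁ : IsSemiOp γ₁) (hγ₂ : IsSemiOp γ₂) (hsub : γ₁ E θ ⊆ γ₂ E θ)
    (hθ : θ ∈ E) (hθ' : θ' ∈ E) (h : ¬ ρ.R f γ₁ E θ θ' i F) :
    ¬ ρ.R f γ₂ E θ θ' i F := by
  obtain ⟨τ, hτ, γ', hγ'⟩ := (hρ f γ₁ E θ θ' i F hγ₁ ⟨θ, hθ⟩ hθ hθ').mp h
  exact (hρ f γ₂ E θ θ' i F hγ₂ ⟨θ, hθ⟩ hθ hθ').mpr ⟨τ, hsub hτ, γ', hγ'⟩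

theorem Dissectible.gtRel_mono {ρ : SolutionNotion I Θi X} (hρ : Dissectible ρ)
    {f : (∀ j, Θi j) → X} {γ₁ γ₂ : Set (∀ j, Θi j) → (∀ j, Θi j) → Set (∀ j, Θi j)}
    {E : Set (∀ j, Θi j)} {i : I} {a b : ∀ j, Θi j}
    (hγ₁ : IsSemiOp γ₁) (hγ₂ : IsSemiOp γ₂) (hsub : γ₁ E a ⊆ γ₂ E a)
    (h : gtRel ρ f γ₁ E i a b) : gtRel ρ f γ₂ E i a b :=
  ⟨h.1, h.2.1, hρ.not_R_mono hγ₁ hγ₂ hsub h.1 h.2.1 h.2.2⟩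

theorem Dissectible.simRel_mono {ρ : SolutionNotion I Θi X} (hρ : Dissectible ρ)
    {f : (∀ j, Θi j) → X} {γ₁ γ₂ : Set (∀ j, Θi j) → (∀ j, Θi j) → Set (∀ j, Θi j)}
    {E : Set (∀ j, Θi j)} {i : I} {a b : ∀ j, Θi j}
    (hγ₁ : IsSemiOp γ₁) (hγ₂ : IsSemiOp γ₂) (hsub : ∀ θ, γ₁ E θ ⊆ γ₂ E θ)
    (h : simRel ρ f γ₁ E i a b) : simRel ρ f γ₂ E i a b := by
  rcases h with heq | hab | hba
  · exact Or.inl heq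
  · exact Or.inr (Or.inl (hρ.gtRel_mono hγ₁ hγ₂ (hsub a) hab))
  · exact Or.inr (Or.inr (hρ.gtRel_mono hγ₁ hγ₂ (hsub b) hba))

section Canonical

variable {ρ : SolutionNotion I Θi X} {f : (∀ j, Θi j) → X} {E : Set (∀ j, Θi j)}
  {θ σ : ∀ j, Θi j}

theorem canonN_of_notMem (n : ℕ) (hθ : θ ∉ E) : canonN ρ f n E θ = E := by
  cases n <;> simp [canonN, hθ]

theorem mem_canonN_succ (n : ℕ) (hθ : θ ∈ E) :
    σ ∈ canonN ρ f (n + 1) E θ ↔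
      σ ∈ E ∧ ∃ τ ∈ canonN ρ f n E θ, ∀ i, simRel ρ f (canonN ρ f n) E i τ σ := by
  simp [canonN, hθ]

theorem canonN_subset (n : ℕ) (hθ : θ ∈ E) : canonN ρ f n E θ ⊆ E := by
  cases n with
  | zero => simp [canonN, hθ]
  | succ n => exact fun σ hσ => ((mem_canonN_succ n hθ).mp hσ).1

theorem mem_canonN_self (n : ℕ) (hθ : θ ∈ E) : θ ∈ canonN ρ f n E θ := by
  induction n with
  | zero => simp [canonN, hθ]
  | succ n ih => exact (mem_canonN_succ n hθ).mpr ⟨hθ, θ, ih, fun _ => Or.inl rfl⟩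

theorem isSemiOp_canonN (n : ℕ) : IsSemiOp (canonN ρ f n) := by
  intro E θ hE
  by_cases hθ : θ ∈ E
  · exact ⟨θ, mem_canonN_self n hθ⟩
  · rwa [canonN_of_notMem n hθ]

theorem monotone_canonN (E : Set (∀ j, Θi j)) (θ : ∀ j, Θi j) :
    Monotone fun n => canonN ρ f n E θ := by
  refine monotone_nat_of_le_succ fun n σ hσ => ?_
  by_cases hθ : θ ∈ E
  · exact (mem_canonN_succ n hθ).mpr
      ⟨canonN_subset n hθ hσ, σ, hσ, fun _ => Or.inl rfl⟩
  · simpa only [canonN_of_notMem _ hθ] using hσ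

theorem simRel_canonN_mono (hρ : Dissectible ρ) {n m : ℕ} (hnm : n ≤ m) {i : I}
    {a b : ∀ j, Θi j} (h : simRel ρ f (canonN ρ f n) E i a b) :
    simRel ρ f (canonN ρ f m) E i a b :=
  hρ.simRel_mono (isSemiOp_canonN n) (isSemiOp_canonN m)
    (fun θ => monotone_canonN E θ hnm) h

theorem canon_of_mem (hθ : θ ∈ E) : canon ρ f E θ = ⋃ n, canonN ρ f n E θ :=
  if_pos hθ

theorem canon_subset (hθ : θ ∈ E) : canon ρ f E θ ⊆ E := by
  rw [canon_of_mem hθ]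
  exact Set.iUnion_subset fun n => canonN_subset n hθ

/-- Each level of the construction started at `θ'` stays inside `canon ρ f E θ`: a one-step
extension from `τ ∈ canonN k E θ` taken at level `m` is, by monotonicity in the level, a
one-step extension at level `max k m` of the construction started at `θ`. -/
theorem canonN_subset_canon (hρ : Dissectible ρ) {θ' : ∀ j, Θi j} (hθ : θ ∈ E)
    (hθ' : θ' ∈ canon ρ f E θ) (m : ℕ) : canonN ρ f m E θ' ⊆ canon ρ f E θ := by
  have hθ'E : θ' ∈ E := canon_subset hθ hθ'
  rw [canon_of_mem hθ] at hθ' ⊢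
  induction m with
  | zero =>
    intro σ hσ
    simp only [canonN, if_pos hθ'E, Set.mem_singleton_iff] at hσ
    exact hσ ▸ hθ'
  | succ m ih =>
    intro σ hσ
    obtain ⟨hσE, τ, hτ, hsim⟩ := (mem_canonN_succ m hθ'E).mp hσ
    obtain ⟨k, hk⟩ := Set.mem_iUnion.mp (ih hτ)
    refine Set.mem_iUnion.mpr ⟨max k m + 1, (mem_canonN_succ _ hθ).mpr ⟨hσE, τ, ?_, ?_⟩⟩
    · exact monotone_canonN E θ (le_max_left k m) hk
    · exact fun i => simRel_canonN_mono hρ (le_max_right k m) (hsim i)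

end Canonical

theorem canon_trans_general
    (ρ : SolutionNotion I Θi X) (hρ : Dissectible ρ) (f : (∀ j, Θi j) → X)
    (E : Set (∀ j, Θi j))
    (θ θ' : ∀ j, Θi j) (hθ : θ ∈ E) (hθ' : θ' ∈ canon ρ f E θ) :
    canon ρ f E θ' ⊆ canon ρ f E θ := by
  rw [canon_of_mem (canon_subset hθ hθ')]
  exact Set.iUnion_subset (canonN_subset_canon hρ hθ hθ')

/-- transitivity of the canonical semi-operator of a dissectible
solution notion: if `θ ∈ E` and `θ' ∈ γ^{(ρ,f)}[E,θ]`, then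
`γ^{(ρ,f)}[E,θ'] ⊆ γ^{(ρ,f)}[E,θ]`. -/
theorem canon_trans
    [Fintype I] [Nonempty I] [∀ i, Fintype (Θi i)] [∀ i, Nonempty (Θi i)]
    (ρ : SolutionNotion I Θi X) (hρ : Dissectible ρ) (f : (∀ j, Θi j) → X)
    (E : Set (∀ j, Θi j)) (hE : E.Nonempty)
    (θ θ' : ∀ j, Θi j) (hθ : θ ∈ E) (hθ' : θ' ∈ canon ρ f E θ) :
    canon ρ f E θ' ⊆ canon ρ f E θ :=
  canon_trans_general ρ hρ f E θ θ' hθ hθ'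

end SeqMech
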